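/- Let L ≥ 11 and let μ ∈ {0,1}^L be a configuration on the ring ℤ/Lℤ. Suppose μ satisfies: (1) for every site x with μₓ = 1 and μₓ₋₁ = μₓ₊₁ = 0 one has μₓ₋₂ = μₓ₊₂ = 0; and (2) for every x with μₓ = μₓ₊₁ = 1 the three sites on either side of the pair are empty (μₓ₋₁ = μₓ₋₂ = μₓ₋₃ = 0 and μₓ₊₂ = μₓ₊₃ = μₓ₊₄ = 0), and if μₓ₊₅ = 1 then μₓ₊₆ = 0, and if μₓ₋₄ = 1 then μₓ₋₅ = 0. Then μ admits a unique tiling of the ring by void tiles V = (0), monomer tiles M = (100), and dimer tiles D = (011000). -/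

import Mathlib

/-- The three tile types: void V = (0), monomer M = (100), dimer D = (011000). -/
inductive VMDTile | V | M | D
deriving DecidableEq

/-- The length of a tile. -/
def VMDTile.len : VMDTile → ℕ
  | .V => 1
  | .M => 3
  | .D => 6

/-- The occupation pattern of a tile at offset k. -/
def VMDTile.pat : VMDTile → ℕ → Fin 2
  | .V, _ => 0
  | .M, k => if k = 0 then 1 else 0
  | .D, k => if k = 1 ∨ k = 2 then 1 else 0

/-- `s` is a VMD tiling of the ring ℤ/Lℤ reproducing the configuration `μ`:
`s x = some τ` means a tile of type τ starts at site x; every site is covered by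
exactly one tile, and the concatenated patterns give back μ. -/
def IsVMDTiling {L : ℕ} (μ : ZMod L → Fin 2) (s : ZMod L → Option VMDTile) : Prop :=
  (∀ y : ZMod L, ∃! p : ZMod L × VMDTile,
      s p.1 = some p.2 ∧ ∃ k : ℕ, k < p.2.len ∧ y = p.1 + (k : ZMod L)) ∧
  (∀ x : ZMod L, ∀ τ : VMDTile, s x = some τ →
      ∀ k : ℕ, k < τ.len → μ (x + (k : ZMod L)) = τ.pat k)

/-!
The canonical tiling puts a dimer in front of every pair of ones, a monomer on every isolated
one, and a void on every empty site these tiles do not reach; every site lies in some canonical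
tile. Conditions (1) and (2) are what make these tiles realise their patterns and
keeps every canonical tile from starting inside another, so each site lies in exactly one.
Conversely, in any tiling an occupied site is the first site of a monomer or the second or
third site of a dimer, which forces every canonical tile; and a tiling containing all the
tiles of another tiling coincides with it.
-/

theorem VMDTile.len_pos (τ : VMDTile) : 0 < τ.len := by
  cases τ <;> decide

variable {L : ℕ} {μ ν : ZMod L → Fin 2} {s t : ZMod L → Option VMDTile}

def HasPatternAt (μ : ZMod L → Fin 2) (x : ZMod L) : VMDTile → Prop
  | .V => μ x = 0
  | .M => μ x = 1 ∧ μ (x + 1) = 0 ∧ μ (x + 2) = 0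
  | .D => μ x = 0 ∧ μ (x + 1) = 1 ∧ μ (x + 2) = 1 ∧ μ (x + 3) = 0 ∧ μ (x + 4) = 0 ∧ μ (x + 5) = 0

theorem hasPatternAt_iff {x : ZMod L} {τ : VMDTile} :
    HasPatternAt μ x τ ↔ ∀ k < τ.len, μ (x + k) = τ.pat k := by
  cases τ <;> simp [HasPatternAt, VMDTile.len, VMDTile.pat, Nat.forall_lt_succ_right,
    Nat.le_one_iff_eq_zero_or_eq_one, or_imp, forall_and, and_assoc]

namespace IsVMDTiling

theorem hasPatternAt (hs : IsVMDTiling μ s) {x : ZMod L} {τ : VMDTile} (hx : s x = some τ) :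
    HasPatternAt μ x τ :=
  hasPatternAt_iff.2 (hs.2 x τ hx)

theorem exists_sub_eq_some (hs : IsVMDTiling μ s) (y : ZMod L) :
    ∃ τ : VMDTile, ∃ k < τ.len, s (y - k) = some τ := by
  obtain ⟨⟨p, τ⟩, ⟨hp, k, hk, rfl⟩, -⟩ := hs.1 y
  exact ⟨τ, k, hk, by rwa [add_sub_cancel_right]⟩

theorem eq_of_forall_eq_some (hs : IsVMDTiling μ s) (ht : IsVMDTiling ν t)
    (hst : ∀ x τ, s x = some τ → t x = some τ) : s = t := by
  funext x
  cases htx : t x with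
  | none => exact Option.eq_none_iff_forall_ne_some.2 fun τ hsx => by simp [hst x τ hsx] at htx
  | some τ =>
    obtain ⟨⟨p, τ'⟩, ⟨hp, k, hk, hx⟩, -⟩ := hs.1 x
    obtain ⟨_, -, huniq⟩ := ht.1 x
    have hself := huniq (x, τ) ⟨htx, 0, τ.len_pos, by simp⟩
    have hother := huniq (p, τ') ⟨hst p τ' hp, k, hk, hx⟩
    obtain ⟨rfl, rfl⟩ := Prod.ext_iff.1 (hself.trans hother.symm)
    exact hp

end IsVMDTiling

def IsolatedOnesSpaced (μ : ZMod L → Fin 2) : Prop :=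
  ∀ x : ZMod L, μ x = 1 → μ (x - 1) = 0 → μ (x + 1) = 0 → μ (x - 2) = 0 ∧ μ (x + 2) = 0

def PairsSpaced (μ : ZMod L → Fin 2) : Prop :=
  ∀ x : ZMod L, μ x = 1 → μ (x + 1) = 1 →
    (μ (x - 1) = 0 ∧ μ (x - 2) = 0 ∧ μ (x - 3) = 0 ∧
      μ (x + 2) = 0 ∧ μ (x + 3) = 0 ∧ μ (x + 4) = 0) ∧
    (μ (x + 5) = 1 → μ (x + 6) = 0) ∧ (μ (x - 4) = 1 → μ (x - 5) = 0)

def IsDimerStart (μ : ZMod L → Fin 2) (x : ZMod L) : Prop :=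
  μ (x + 1) = 1 ∧ μ (x + 2) = 1

namespace IsDimerStart

variable {x : ZMod L}

theorem eq_zero (h2 : PairsSpaced μ) (hx : IsDimerStart μ x) :
    μ (x - 2) = 0 ∧ μ x = 0 ∧ μ (x + 3) = 0 ∧ μ (x + 4) = 0 ∧ μ (x + 5) = 0 := by
  obtain ⟨⟨h0, -, hm2, h3, h4, h5⟩, -⟩ :=
    h2 (x + 1) hx.1 (by rw [add_assoc, one_add_one_eq_two]; exact hx.2)
  ring_nf at *
  exact ⟨hm2, h0, h3, h4, h5⟩

theorem not_isDimerStart_add_five (h2 : PairsSpaced μ) (hx : IsDimerStart μ x) :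
    ¬IsDimerStart μ (x + 5) := by
  rintro ⟨h6, h7⟩
  have := (h2 (x + 1) hx.1 (by rw [add_assoc, one_add_one_eq_two]; exact hx.2)).2.1
  ring_nf at *
  simp_all

end IsDimerStart

/-- The tiles of the canonical tiling: a dimer at each pair of ones, a monomer at each
isolated one, and a void at each empty site that these tiles do not reach (for an empty site:
the two sites before it are empty and no dimer starts there or five sites before it). -/
def IsCanonicalStart (μ : ZMod L → Fin 2) (x : ZMod L) : VMDTile → Prop
  | .D => IsDimerStart μ x
  | .M => μ (x - 1) = 0 ∧ μ x = 1 ∧ μ (x + 1) = 0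
  | .V => μ (x - 2) = 0 ∧ μ (x - 1) = 0 ∧ μ x = 0 ∧ ¬IsDimerStart μ x ∧ ¬IsDimerStart μ (x - 5)

open Classical in
noncomputable def canonicalTiling (μ : ZMod L → Fin 2) (x : ZMod L) : Option VMDTile :=
  if IsCanonicalStart μ x .D then some .D
  else if IsCanonicalStart μ x .M then some .M
  else if IsCanonicalStart μ x .V then some .V
  else none

namespace IsCanonicalStart

variable {x : ZMod L} {τ : VMDTile}

theorem unique {τ' : VMDTile} (h : IsCanonicalStart μ x τ) (h' : IsCanonicalStart μ x τ') :
    τ = τ' := by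
  cases τ <;> cases τ' <;> simp_all [IsCanonicalStart, IsDimerStart]

theorem hasPatternAt (h1 : IsolatedOnesSpaced μ) (h2 : PairsSpaced μ)
    (hx : IsCanonicalStart μ x τ) : HasPatternAt μ x τ := by
  cases τ with
  | V => exact hx.2.2.1
  | M => exact ⟨hx.2.1, hx.2.2, (h1 x hx.2.1 hx.1 hx.2.2).2⟩
  | D =>
    obtain ⟨-, h0, h3, h4, h5⟩ := IsDimerStart.eq_zero h2 hx
    exact ⟨h0, hx.1, hx.2, h3, h4, h5⟩

theorem not_isCanonicalStart_add (h1 : IsolatedOnesSpaced μ) (h2 : PairsSpaced μ)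
    (hx : IsCanonicalStart μ x τ) {j : ℕ} (hj0 : 0 < j) (hj : j < τ.len) (τ' : VMDTile) :
    ¬IsCanonicalStart μ (x + j) τ' := by
  cases τ with
  | V => simp only [VMDTile.len] at hj; omega
  | M =>
    obtain ⟨hm1, h0, hp1⟩ := hx
    have hp2 := (h1 x h0 hm1 hp1).2
    have hD2 : ¬IsDimerStart μ (x + 2) := fun hd => by
      have := (IsDimerStart.eq_zero h2 hd).1
      simp_all
    simp only [VMDTile.len] at hj
    interval_cases j <;> cases τ' <;> simp only [IsCanonicalStart, IsDimerStart] at * <;>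
      push_cast at * <;> ring_nf at * <;> simp_all
  | D =>
    obtain ⟨-, h0, h3, h4, h5⟩ := IsDimerStart.eq_zero h2 hx
    have hD5 := IsDimerStart.not_isDimerStart_add_five h2 hx
    obtain ⟨hx1, hx2⟩ := hx
    simp only [VMDTile.len] at hj
    interval_cases j <;> cases τ' <;> simp only [IsCanonicalStart, IsDimerStart] at * <;>
      push_cast at * <;> ring_nf at * <;> simp_all

end IsCanonicalStart

theorem canonicalTiling_eq_some_iff {x : ZMod L} {τ : VMDTile} :
    canonicalTiling μ x = some τ ↔ IsCanonicalStart μ x τ := by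
  unfold canonicalTiling
  constructor
  · intro h
    split_ifs at h with hD hM hV <;> cases h
    exacts [hD, hM, hV]
  · intro h
    split_ifs with hD hM hV
    · rw [h.unique hD]
    · rw [h.unique hM]
    · rw [h.unique hV]
    · cases τ <;> contradiction

theorem exists_isCanonicalStart_sub (μ : ZMod L → Fin 2) (y : ZMod L) :
    ∃ τ : VMDTile, ∃ k < τ.len, IsCanonicalStart μ (y - k) τ := by
  have bit (z : ZMod L) : μ z = 0 ∨ μ z = 1 := by omega
  rcases bit y with hy | hy
  · rcases bit (y - 1) with hm1 | hm1
    · rcases bit (y - 2) with hm2 | hm2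
      · by_cases hD : IsDimerStart μ y
        · exact ⟨.D, 0, by decide, by simpa⟩
        by_cases hD5 : IsDimerStart μ (y - 5)
        · exact ⟨.D, 5, by decide, by simpa⟩
        exact ⟨.V, 0, by decide, by simp [IsCanonicalStart, *]⟩
      rcases bit (y - 3) with hm3 | hm3
      · refine ⟨.M, 2, by decide, ?_⟩
        simp only [IsCanonicalStart]; push_cast; ring_nf at *; simp_all
      · refine ⟨.D, 4, by decide, ?_⟩
        simp only [IsCanonicalStart, IsDimerStart]; push_cast; ring_nf at *; simp_all
    rcases bit (y - 2) with hm2 | hm2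
    · refine ⟨.M, 1, by decide, ?_⟩
      simp only [IsCanonicalStart]; push_cast; ring_nf at *; simp_all
    · refine ⟨.D, 3, by decide, ?_⟩
      simp only [IsCanonicalStart, IsDimerStart]; push_cast; ring_nf at *; simp_all
  rcases bit (y + 1) with hy1 | hy1
  · rcases bit (y - 1) with hm1 | hm1
    · exact ⟨.M, 0, by decide, by simp [IsCanonicalStart, *]⟩
    · refine ⟨.D, 2, by decide, ?_⟩
      simp only [IsCanonicalStart, IsDimerStart]; push_cast; ring_nf at *; simp_all
  · refine ⟨.D, 1, by decide, ?_⟩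
    simp only [IsCanonicalStart, IsDimerStart]; push_cast; ring_nf at *; simp_all

theorem IsCanonicalStart.eq_of_add_eq_add (h1 : IsolatedOnesSpaced μ) (h2 : PairsSpaced μ)
    {p p' : ZMod L} {τ τ' : VMDTile} {k k' : ℕ} (hp : IsCanonicalStart μ p τ)
    (hp' : IsCanonicalStart μ p' τ') (hk : k < τ.len) (hk' : k' < τ'.len)
    (h : p + k = p' + k') : p = p' ∧ τ = τ' := by
  wlog hkk : k ≤ k' generalizing p p' τ τ' k k'
  · obtain ⟨e, f⟩ := this hp' hp hk' hk h.symm (by omega)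
    exact ⟨e.symm, f.symm⟩
  obtain ⟨d, rfl⟩ := Nat.exists_eq_add_of_le hkk
  have hpd : p = p' + d := by push_cast at h; linear_combination h
  obtain rfl | hd := Nat.eq_zero_or_pos d
  · rw [Nat.cast_zero, add_zero] at hpd
    subst hpd
    exact ⟨rfl, hp.unique hp'⟩
  · exact (hp'.not_isCanonicalStart_add h1 h2 hd (by omega) τ (hpd ▸ hp)).elim

theorem isVMDTiling_canonicalTiling (h1 : IsolatedOnesSpaced μ) (h2 : PairsSpaced μ) :
    IsVMDTiling μ (canonicalTiling μ) := by
  refine ⟨fun y => ?_, fun x τ hx k hk =>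
    hasPatternAt_iff.1 ((canonicalTiling_eq_some_iff.1 hx).hasPatternAt h1 h2) k hk⟩
  obtain ⟨τ, k, hk, hy⟩ := exists_isCanonicalStart_sub μ y
  refine ⟨(y - k, τ), ⟨canonicalTiling_eq_some_iff.2 hy, k, hk, by simp⟩, ?_⟩
  rintro ⟨p, τ'⟩ ⟨hp, k', hk', hpy⟩
  obtain ⟨rfl, rfl⟩ :=
    (canonicalTiling_eq_some_iff.1 hp).eq_of_add_eq_add h1 h2 hy hk' hk (by simp [← hpy])
  rfl

theorem IsVMDTiling.eq_some_of_isCanonicalStart (hs : IsVMDTiling μ s) {x : ZMod L}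
    {τ : VMDTile} (hx : IsCanonicalStart μ x τ) : s x = some τ := by
  cases τ with
  | D =>
    obtain ⟨τ', k, hk, hs'⟩ := hs.exists_sub_eq_some (x + 1)
    have := hs.hasPatternAt hs'
    cases τ' <;> simp only [VMDTile.len] at hk <;> interval_cases k <;>
      simp only [IsCanonicalStart, IsDimerStart, HasPatternAt] at * <;>
      push_cast at * <;> ring_nf at * <;> simp_all
  | M | V =>
    obtain ⟨τ', k, hk, hs'⟩ := hs.exists_sub_eq_some x
    have := hs.hasPatternAt hs'
    cases τ' <;> simp only [VMDTile.len] at hk <;> interval_cases k <;>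
      simp only [IsCanonicalStart, IsDimerStart, HasPatternAt] at * <;>
      push_cast at * <;> ring_nf at * <;> simp_all

theorem stmt_8_general (L : ℕ) (μ : ZMod L → Fin 2)
    (h1 : ∀ x : ZMod L, μ x = 1 → μ (x - 1) = 0 → μ (x + 1) = 0 →
        μ (x - 2) = 0 ∧ μ (x + 2) = 0)
    (h2 : ∀ x : ZMod L, μ x = 1 → μ (x + 1) = 1 →
        (μ (x - 1) = 0 ∧ μ (x - 2) = 0 ∧ μ (x - 3) = 0 ∧
          μ (x + 2) = 0 ∧ μ (x + 3) = 0 ∧ μ (x + 4) = 0) ∧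
        (μ (x + 5) = 1 → μ (x + 6) = 0) ∧
        (μ (x - 4) = 1 → μ (x - 5) = 0)) :
    ∃! s : ZMod L → Option VMDTile, IsVMDTiling μ s := by
  have hcan := isVMDTiling_canonicalTiling h1 h2
  refine ⟨canonicalTiling μ, hcan, fun s hs => (hcan.eq_of_forall_eq_some hs ?_).symm⟩
  exact fun x τ hx => hs.eq_some_of_isCanonicalStart (canonicalTiling_eq_some_iff.1 hx)

/-- a configuration on the ring satisfying the two combinatorial
conditions admits a unique VMD tiling. -/
theorem stmt_8 (L : ℕ) (hL : 11 ≤ L) (μ : ZMod L → Fin 2)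
    (h1 : ∀ x : ZMod L, μ x = 1 → μ (x - 1) = 0 → μ (x + 1) = 0 →
        μ (x - 2) = 0 ∧ μ (x + 2) = 0)
    (h2 : ∀ x : ZMod L, μ x = 1 → μ (x + 1) = 1 →
        (μ (x - 1) = 0 ∧ μ (x - 2) = 0 ∧ μ (x - 3) = 0 ∧
          μ (x + 2) = 0 ∧ μ (x + 3) = 0 ∧ μ (x + 4) = 0) ∧
        (μ (x + 5) = 1 → μ (x + 6) = 0) ∧
        (μ (x - 4) = 1 → μ (x - 5) = 0)) :
    ∃! s : ZMod L → Option VMDTile, IsVMDTiling μ s :=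
  stmt_8_general L μ h1 h2
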